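/- Consider the n-gon graph on Z_n (n ≥ 3) over F₂, with Ω¹ free of rank 2 over A = F₂(Z_n) on generators e⁺, e⁻ satisfying e± f = (R± f) e± where (R± f)(i) = f(i±1), metric g = e⁺⊗e⁻ + e⁻⊗e⁺, and exterior algebra relations (e±)² = 0, e⁺∧e⁻ = e⁻∧e⁺. The connection ∇e± = 0 with σ = flip on tensor products of e⁺, e⁻ is torsion free (∧(id+σ) = 0 and de± = 0) and metric compatible (∇g = 0), hence a quantum Levi-Civita connection. -/

import Mathlib

/- The n-gon (Cayley graph of Z_n) over F₂. The algebra is A = F₂(Z_n);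
Ω¹ is free of rank 2 on e⁺, e⁻ (index `true` for +, `false` for −), so a
1-form is `c : Bool → A`; a 2-tensor is `c : Bool → Bool → A` (coefficients of
e^a ⊗ e^b, coefficient functions on the left); a 3-tensor similarly. -/

section Polygon
variable (n : ℕ)

/-- The algebra `A = F₂(Z_n)`. -/
abbrev Alg := ZMod n → ZMod 2

/-- `∂₊ f = R₊f + f` and `∂₋ f = R₋f + f`, where `(R±f)(i) = f(i±1)`. -/
def pd (b : Bool) (f : Alg n) : Alg n :=
  fun i => (if b then f (i + 1) else f (i - 1)) + f i

/-- The quantum Levi-Civita connection `∇e± = 0`, extended by the Leibniz rule: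
`∇(f⁺e⁺ + f⁻e⁻) = df⁺⊗e⁺ + df⁻⊗e⁻`, with `df = (∂₊f)e⁺ + (∂₋f)e⁻`. -/
def nabla1 (c : Bool → Alg n) : Bool → Bool → Alg n :=
  fun a b => pd n a (c b)

/-- `σ` = flip on the tensor products of `e⁺, e⁻` (a bimodule map). -/
def sigma (c : Bool → Bool → Alg n) : Bool → Bool → Alg n := fun a b => c b a

/-- The wedge product to `Ω² = A·Vol`: `e⁺∧e⁻ = e⁻∧e⁺ = Vol`, `(e±)² = 0`. -/
def wedge (c : Bool → Bool → Alg n) : Alg n := c true false + c false true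

/-- `d` on 1-forms: `d(f⁺e⁺ + f⁻e⁻) = (∂₋f⁺ + ∂₊f⁻)·Vol` (since `de± = 0`). -/
def dOm (c : Bool → Alg n) : Alg n := pd n false (c true) + pd n true (c false)

/-- The tensor product connection on `Ω¹⊗Ω¹`:
`∇₂(f e^a ⊗ e^b) = ∇(f e^a)⊗e^b + (σ⊗id)(f e^a ⊗ ∇e^b) = df⊗e^a⊗e^b`
as `∇e^b = 0`. -/
def nabla2 (c : Bool → Bool → Alg n) : Bool → Bool → Bool → Alg n :=
  fun u v w => pd n u (c v w)

/-- The unique quantum metric `g = e⁺⊗e⁻ + e⁻⊗e⁺`. -/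
def gMet : Bool → Bool → Alg n := fun a b => if a ≠ b then 1 else 0

end Polygon

section

variable {n : ℕ}

theorem pd_const (b : Bool) (a : ZMod 2) : pd n b (fun _ => a) = 0 := by
  funext i
  cases b <;> exact CharTwo.add_self_eq_zero a

theorem wedge_add (c c' : Bool → Bool → Alg n) :
    wedge n (c + c') = wedge n c + wedge n c' := by
  simp only [wedge, Pi.add_apply]
  abel

theorem wedge_sigma (c : Bool → Bool → Alg n) : wedge n (sigma n c) = wedge n c :=
  add_comm _ _

-- The relation `e⁺∧e⁻ = e⁻∧e⁺` makes `∧` symmetric, and symmetric means antisymmetric over F₂.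
theorem wedge_add_sigma (c : Bool → Bool → Alg n) : wedge n (c + sigma n c) = 0 := by
  rw [wedge_add, wedge_sigma]
  exact CharTwo.add_self_eq_zero _

theorem wedge_nabla1 (ω : Bool → Alg n) : wedge n (nabla1 n ω) = dOm n ω :=
  add_comm _ _

-- The coefficients of `g` are constant functions, which every `∂±` kills.
theorem nabla2_gMet : nabla2 n (gMet n) = 0 := by
  funext u v w
  cases v <;> cases w <;> exact pd_const u _

end

theorem polygon_QLC_general (n : ℕ) :
    (∀ c : Bool → Bool → Alg n, wedge n (c + sigma n c) = 0) ∧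
    (∀ ω : Bool → Alg n, wedge n (nabla1 n ω) = dOm n ω) ∧
    nabla2 n (gMet n) = 0 :=
  ⟨wedge_add_sigma, wedge_nabla1, nabla2_gMet⟩

/-- On the n-gon (n ≥ 3) over F₂, the connection `∇e± = 0` with `σ` the flip is
torsion free (`∧(id+σ) = 0` on 2-tensors, equivalently `∧∇ω = dω` for all
1-forms `ω`) and metric compatible (`∇g = 0`), hence a quantum Levi-Civita
connection for the unique metric. -/
theorem polygon_QLC (n : ℕ) (hn : 3 ≤ n) :
    (∀ c : Bool → Bool → Alg n, wedge n (c + sigma n c) = 0) ∧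
    (∀ ω : Bool → Alg n, wedge n (nabla1 n ω) = dOm n ω) ∧
    nabla2 n (gMet n) = 0 :=
  polygon_QLC_general n
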